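/- Let N be a positive integer and μ, ε > 0 real. Let D₁, D₂, D₃ be pairwise commuting skew-symmetric real N×N matrices, 𝔻 := [[0, −D₃, D₂], [D₃, 0, −D₁], [−D₂, D₁, 0]] (3N×3N), and 𝒟 := (1/√(με))·[[0, −𝔻], [𝔻, 0]] (6N×6N). Given H⁰, E⁰ ∈ ℝ^(3N), define (√μ·H^t, √ε·E^t) = exp(t𝒟)·(√μ·H⁰, √ε·E⁰) and set Ḣ^t := −(1/μ)·𝔻·E^t and Ė^t := (1/ε)·𝔻·H^t. Then μ·‖Ḣ^t‖² + ε·‖Ė^t‖² = μ·‖Ḣ⁰‖² + ε·‖Ė⁰‖² for all t ∈ ℝ. -/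

import Mathlib

open Matrix

/-- A `3N × 3N` block matrix built from a `3 × 3` array of `N × N` blocks. -/
def blockMat3 {N : ℕ} {α : Type*} (A : Fin 3 → Fin 3 → Matrix (Fin N) (Fin N) α) :
    Matrix (Fin 3 × Fin N) (Fin 3 × Fin N) α :=
  Matrix.of fun p q => A p.1 q.1 p.2 q.2

/-- The `3N × 3N` block-diagonal matrix with each diagonal block equal to `D`. -/
def blockDiag3 {N : ℕ} {α : Type*} [Zero α] (D : Matrix (Fin N) (Fin N) α) :
    Matrix (Fin 3 × Fin N) (Fin 3 × Fin N) α :=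
  Matrix.of fun p q => if p.1 = q.1 then D p.2 q.2 else 0

/-! Since D₁, D₂, D₃ are skew, the curl matrix 𝔻 is symmetric, so 𝒟 is skew-symmetric and
exp(t𝒟) is orthogonal. The scaled velocity (√μ Ḣᵗ, √ε Ėᵗ) is 𝒟 applied to the scaled state
(√μ Hᵗ, √ε Eᵗ); as 𝒟 commutes with exp(t𝒟), the velocity is itself propagated by exp(t𝒟), so its
squared norm, which is the energy ℰ₂, is conserved. -/

theorem blockMat3_transpose {N : ℕ} {α : Type*} (A : Fin 3 → Fin 3 → Matrix (Fin N) (Fin N) α) :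
    (blockMat3 A)ᵀ = blockMat3 fun i j => (A j i)ᵀ :=
  rfl

theorem isSymm_blockMat3_curl {N : ℕ} {R : Type*} [CommRing R]
    {D1 D2 D3 : Matrix (Fin N) (Fin N) R} (hD1 : D1ᵀ = -D1) (hD2 : D2ᵀ = -D2) (hD3 : D3ᵀ = -D3) :
    (blockMat3 ![![0, -D3, D2], ![D3, 0, -D1], ![-D2, D1, 0]]).IsSymm := by
  rw [IsSymm, blockMat3_transpose]
  congr 1
  funext i j
  fin_cases i <;> fin_cases j <;> simp [hD1, hD2, hD3]

theorem fromBlocks_zero_neg_transpose {m R : Type*} [Ring R] {B : Matrix m m R} (hB : B.IsSymm) :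
    (fromBlocks 0 (-B) B 0)ᵀ = -fromBlocks 0 (-B) B 0 := by
  rw [fromBlocks_transpose, fromBlocks_neg, transpose_neg, hB.eq]
  simp

theorem exp_mem_orthogonalGroup_of_transpose_eq_neg {m : Type*} [Fintype m] [DecidableEq m]
    {A : Matrix m m ℝ} (hA : Aᵀ = -A) : NormedSpace.exp A ∈ orthogonalGroup m ℝ := by
  rw [mem_orthogonalGroup_iff', ← exp_transpose, hA,
    ← exp_add_of_commute _ _ (Commute.neg_left (Commute.refl A)), neg_add_cancel,
    NormedSpace.exp_zero]

theorem dotProduct_self_mulVec_of_mem_orthogonalGroup {m R : Type*} [Fintype m] [DecidableEq m]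
    [CommRing R] {M : Matrix m m R} (hM : M ∈ orthogonalGroup m R) (v : m → R) :
    M *ᵥ v ⬝ᵥ M *ᵥ v = v ⬝ᵥ v := by
  rw [dotProduct_mulVec, vecMul_mulVec, ← mulVec_transpose, (mem_orthogonalGroup_iff' m R).mp hM]
  simp

theorem smul_fromBlocks_mulVec_sum_elim {m : Type*} [Fintype m] {μ ε : ℝ} (hμ : 0 < μ)
    (hε : 0 < ε) (B : Matrix m m ℝ) (h e : m → ℝ) :
    ((√(μ * ε))⁻¹ • fromBlocks 0 (-B) B 0) *ᵥ Sum.elim (√μ • h) (√ε • e) =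
      Sum.elim (√μ • (-(1 / μ)) • B *ᵥ e) (√ε • (1 / ε) • B *ᵥ h) := by
  rw [smul_mulVec, fromBlocks_mulVec, Real.sqrt_mul hμ.le]
  ext (i | i) <;> simp [mulVec_smul, neg_mulVec] <;> field_simp <;>
    simp [Real.sq_sqrt, hμ.le, hε.le, mul_comm]

theorem dotProduct_sum_elim_smul_self {m : Type*} [Fintype m] (a b : ℝ) (x y : m → ℝ) :
    Sum.elim (a • x) (b • y) ⬝ᵥ Sum.elim (a • x) (b • y) =
      a ^ 2 * ∑ i, x i ^ 2 + b ^ 2 * ∑ i, y i ^ 2 := by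
  rw [sumElim_dotProduct_sumElim]
  simp only [dotProduct, Pi.smul_apply, smul_eq_mul, Finset.mul_sum]
  congr 1 <;> exact Finset.sum_congr rfl fun i _ => by ring

theorem mulVec_exp_smul_mulVec_comm {m : Type*} [Fintype m] [DecidableEq m] (A : Matrix m m ℝ)
    (t : ℝ) (v : m → ℝ) :
    A *ᵥ NormedSpace.exp (t • A) *ᵥ v = NormedSpace.exp (t • A) *ᵥ A *ᵥ v := by
  rw [mulVec_mulVec, mulVec_mulVec, (((Commute.refl A).smul_right t).exp_right).eq]

theorem discrete_energy_conservation_E2_general {N : ℕ} (μ ε : ℝ) (hμ : 0 < μ) (hε : 0 < ε)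
    (D1 D2 D3 : Matrix (Fin N) (Fin N) ℝ)
    (hD1 : D1ᵀ = -D1) (hD2 : D2ᵀ = -D2) (hD3 : D3ᵀ = -D3)
    (𝔻 : Matrix (Fin 3 × Fin N) (Fin 3 × Fin N) ℝ)
    (h𝔻 : 𝔻 = blockMat3 ![![0, -D3, D2], ![D3, 0, -D1], ![-D2, D1, 0]])
    (𝒟 : Matrix ((Fin 3 × Fin N) ⊕ (Fin 3 × Fin N)) ((Fin 3 × Fin N) ⊕ (Fin 3 × Fin N)) ℝ)
    (h𝒟 : 𝒟 = (Real.sqrt (μ * ε))⁻¹ • Matrix.fromBlocks 0 (-𝔻) 𝔻 0)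
    (H E : ℝ → (Fin 3 × Fin N → ℝ))
    (hprop : ∀ t : ℝ,
      Sum.elim (fun i => Real.sqrt μ * H t i) (fun i => Real.sqrt ε * E t i) =
        (NormedSpace.exp (t • 𝒟)).mulVec
          (Sum.elim (fun i => Real.sqrt μ * H 0 i) (fun i => Real.sqrt ε * E 0 i)))
    (Hdot Edot : ℝ → (Fin 3 × Fin N → ℝ))
    (hHdot : ∀ t : ℝ, Hdot t = (-(1 / μ)) • 𝔻.mulVec (E t))
    (hEdot : ∀ t : ℝ, Edot t = (1 / ε) • 𝔻.mulVec (H t)) :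
    ∀ t : ℝ,
      μ * (∑ i, Hdot t i ^ 2) + ε * (∑ i, Edot t i ^ 2) =
        μ * (∑ i, Hdot 0 i ^ 2) + ε * (∑ i, Edot 0 i ^ 2) := by
  have h𝒟skew : 𝒟ᵀ = -𝒟 := by
    rw [h𝒟, transpose_smul,
      fromBlocks_zero_neg_transpose (h𝔻 ▸ isSymm_blockMat3_curl hD1 hD2 hD3), smul_neg]
  have henergy : ∀ t, μ * (∑ i, Hdot t i ^ 2) + ε * (∑ i, Edot t i ^ 2) =
      𝒟 *ᵥ Sum.elim (√μ • H t) (√ε • E t) ⬝ᵥ 𝒟 *ᵥ Sum.elim (√μ • H t) (√ε • E t) := by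
    intro t
    rw [h𝒟, smul_fromBlocks_mulVec_sum_elim hμ hε, dotProduct_sum_elim_smul_self,
      Real.sq_sqrt hμ.le, Real.sq_sqrt hε.le, hHdot, hEdot]
  intro t
  have hexp : 𝒟 *ᵥ Sum.elim (√μ • H t) (√ε • E t) =
      NormedSpace.exp (t • 𝒟) *ᵥ 𝒟 *ᵥ Sum.elim (√μ • H 0) (√ε • E 0) := by
    rw [← mulVec_exp_smul_mulVec_comm]
    exact congrArg (𝒟 *ᵥ ·) (hprop t)
  have horth : NormedSpace.exp (t • 𝒟) ∈ orthogonalGroup _ ℝ :=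
    exp_mem_orthogonalGroup_of_transpose_eq_neg (by rw [transpose_smul, h𝒟skew, smul_neg])
  rw [henergy, henergy, hexp, dotProduct_self_mulVec_of_mem_orthogonalGroup horth]

/-- the fully discrete exponential scheme exactly conserves the discrete energy ℰ₂: `μ‖Ḣᵗ‖² + ε‖Ėᵗ‖²` is constant in `t`, where `Ḣᵗ = -(1/μ)𝔻Eᵗ` and `Ėᵗ = (1/ε)𝔻Hᵗ`. -/
theorem discrete_energy_conservation_E2 {N : ℕ} (hN : 0 < N) (μ ε : ℝ) (hμ : 0 < μ) (hε : 0 < ε)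
    (D1 D2 D3 : Matrix (Fin N) (Fin N) ℝ)
    (h12 : D1 * D2 = D2 * D1) (h13 : D1 * D3 = D3 * D1) (h23 : D2 * D3 = D3 * D2)
    (hD1 : D1ᵀ = -D1) (hD2 : D2ᵀ = -D2) (hD3 : D3ᵀ = -D3)
    (𝔻 : Matrix (Fin 3 × Fin N) (Fin 3 × Fin N) ℝ)
    (h𝔻 : 𝔻 = blockMat3 ![![0, -D3, D2], ![D3, 0, -D1], ![-D2, D1, 0]])
    (𝒟 : Matrix ((Fin 3 × Fin N) ⊕ (Fin 3 × Fin N)) ((Fin 3 × Fin N) ⊕ (Fin 3 × Fin N)) ℝ)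
    (h𝒟 : 𝒟 = (Real.sqrt (μ * ε))⁻¹ • Matrix.fromBlocks 0 (-𝔻) 𝔻 0)
    (H E : ℝ → (Fin 3 × Fin N → ℝ))
    (hprop : ∀ t : ℝ,
      Sum.elim (fun i => Real.sqrt μ * H t i) (fun i => Real.sqrt ε * E t i) =
        (NormedSpace.exp (t • 𝒟)).mulVec
          (Sum.elim (fun i => Real.sqrt μ * H 0 i) (fun i => Real.sqrt ε * E 0 i)))
    (Hdot Edot : ℝ → (Fin 3 × Fin N → ℝ))
    (hHdot : ∀ t : ℝ, Hdot t = (-(1 / μ)) • 𝔻.mulVec (E t))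
    (hEdot : ∀ t : ℝ, Edot t = (1 / ε) • 𝔻.mulVec (H t)) :
    ∀ t : ℝ,
      μ * (∑ i, Hdot t i ^ 2) + ε * (∑ i, Edot t i ^ 2) =
        μ * (∑ i, Hdot 0 i ^ 2) + ε * (∑ i, Edot 0 i ^ 2) :=
  discrete_energy_conservation_E2_general μ ε hμ hε D1 D2 D3 hD1 hD2 hD3 𝔻 h𝔻 𝒟 h𝒟 H E hprop Hdot
    Edot hHdot hEdot
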